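/- arXiv:2407.09040 — 3 statements merged into one kernel-verified Lean document; each statement's English description precedes it below -/
import Mathlib

section
/- Let F ⊆ [0,1] be a compact set containing 0 and 1. For u : F → ℝ continuous, define the affine extension P(u) : [0,1] → ℝ by P(u)(t) = u(t) if t ∈ F, and otherwise P(u)(t) = u(t⁻)·(t⁺−t)/(t⁺−t⁻) + u(t⁺)·(t−t⁻)/(t⁺−t⁻) where t⁻ = sup{x ∈ F : x ≤ t} and t⁺ = inf{x ∈ F : x ≥ t}. Then P(u) is continuous on [0,1]. -/
open Set

set_option maxHeartbeats 1000000

private lemma aux_comb (x y ut lam mu ε : ℝ) (hl : 0 ≤ lam) (hm : 0 ≤ mu)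
    (hsum : lam + mu = 1) (hε : 0 < ε)
    (hnear : |x - ut| < ε/2) (hfar : mu * |y - ut| ≤ ε/2) :
    |x*lam + y*mu - ut| < ε := by
  have heq : x*lam + y*mu - ut = lam*(x-ut) + mu*(y-ut) := by
    linear_combination ut * hsum
  rw [heq]
  have h1 : |lam*(x-ut) + mu*(y-ut)| ≤ lam*|x-ut| + mu*|y-ut| := by
    calc |lam*(x-ut) + mu*(y-ut)| ≤ |lam*(x-ut)| + |mu*(y-ut)| := abs_add_le _ _
    _ = lam*|x-ut| + mu*|y-ut| := by
        rw [abs_mul, abs_mul, abs_of_nonneg hl, abs_of_nonneg hm]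
  have h2 : lam*|x-ut| ≤ |x-ut| := by nlinarith [abs_nonneg (x-ut)]
  linarith

theorem stmt_2 (F : Set ℝ) (hFcomp : IsCompact F) (hFsub : F ⊆ Icc (0:ℝ) 1)
    (h0 : (0:ℝ) ∈ F) (h1 : (1:ℝ) ∈ F)
    (u : ℝ → ℝ) (hu : ContinuousOn u F)
    (P : ℝ → ℝ)
    (hPF : ∀ t ∈ F, P t = u t)
    (hPnF : ∀ t ∈ Icc (0:ℝ) 1, t ∉ F →
      P t = u (sSup (F ∩ Iic t)) *
              ((sInf (F ∩ Ici t) - t) / (sInf (F ∩ Ici t) - sSup (F ∩ Iic t)))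
          + u (sInf (F ∩ Ici t)) *
              ((t - sSup (F ∩ Iic t)) / (sInf (F ∩ Ici t) - sSup (F ∩ Iic t)))) :
    ContinuousOn P (Icc (0:ℝ) 1) := by
  have hAc : ∀ s : ℝ, IsCompact (F ∩ Iic s) := fun s => hFcomp.inter_right isClosed_Iic
  have hBc : ∀ s : ℝ, IsCompact (F ∩ Ici s) := fun s => hFcomp.inter_right isClosed_Ici
  have habs : ∀ s ∈ Icc (0:ℝ) 1, s ∉ F →
      sSup (F ∩ Iic s) ∈ F ∧ sSup (F ∩ Iic s) < s ∧
      sInf (F ∩ Ici s) ∈ F ∧ s < sInf (F ∩ Ici s) := by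
    intro s hs hsF
    have hAne : (F ∩ Iic s).Nonempty := ⟨0, h0, hs.1⟩
    have hmemA := (hAc s).sSup_mem hAne
    have hBne : (F ∩ Ici s).Nonempty := ⟨1, h1, hs.2⟩
    have hmemB := (hBc s).sInf_mem hBne
    refine ⟨hmemA.1, lt_of_le_of_ne hmemA.2 ?_, hmemB.1, lt_of_le_of_ne hmemB.2 ?_⟩
    · intro h; exact hsF (h ▸ hmemA.1)
    · intro h; exact hsF (h ▸ hmemB.1)
  intro t ht
  by_cases htF : t ∈ F
  · -- continuity at a point of F : ε-δ argument
    rw [Metric.continuousWithinAt_iff]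
    intro ε hε
    obtain ⟨M0, hM0⟩ := hFcomp.exists_bound_of_continuousOn hu
    set M : ℝ := max M0 1 with hMdef
    have hM1 : (1:ℝ) ≤ M := le_max_right _ _
    have hMpos : (0:ℝ) < M := lt_of_lt_of_le one_pos hM1
    have hMb : ∀ x ∈ F, |u x| ≤ M := fun x hx =>
      le_trans (by simpa [Real.norm_eq_abs] using hM0 x hx) (le_max_left _ _)
    have hut := hu t htF
    rw [Metric.continuousWithinAt_iff] at hut
    obtain ⟨δ₁, hδ₁pos, hδ₁⟩ := hut (ε/2) (by linarith)
    set δ₂ : ℝ := min (δ₁/2) (ε*δ₁/(8*M)) with hδ₂def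
    have hδ₂pos : 0 < δ₂ := lt_min (by linarith) (by positivity)
    have hδ₂a : δ₂ ≤ δ₁/2 := min_le_left _ _
    have hδ₂b : δ₂ ≤ ε*δ₁/(8*M) := min_le_right _ _
    have h8 : 8*M*δ₂ ≤ ε*δ₁ := by
      have := (le_div_iff₀ (show (0:ℝ) < 8*M by positivity)).mp hδ₂b
      linarith
    refine ⟨δ₂, hδ₂pos, ?_⟩
    intro s hs hst
    rw [Real.dist_eq] at hst ⊢
    rw [hPF t htF]
    by_cases hsF : s ∈ F
    · rw [hPF s hsF]
      have : dist (u s) (u t) < ε/2 := hδ₁ hsF (by rw [Real.dist_eq]; linarith [hδ₂a])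
      rw [Real.dist_eq] at this
      linarith
    · obtain ⟨haF, has, hbF, hsb⟩ := habs s hs hsF
      set a := sSup (F ∩ Iic s) with hadef
      set b := sInf (F ∩ Ici s) with hbdef
      have hba : 0 < b - a := by linarith
      rw [hPnF s hs hsF]
      set lam : ℝ := (b - s)/(b - a) with hlamdef
      set mu : ℝ := (s - a)/(b - a) with hmudef
      have hl : 0 ≤ lam := div_nonneg (by linarith) (by linarith)
      have hm : 0 ≤ mu := div_nonneg (by linarith) (by linarith)
      have hsum : lam + mu = 1 := by
        rw [hlamdef, hmudef, ← add_div]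
        field_simp
        ring
      rcases le_or_gt t s with hts | hst'
      · -- t ≤ s, so t ≤ a : near point is a
        have hta : t ≤ a := le_csSup (hAc s).bddAbove ⟨htF, hts⟩
        have hneara : |a - t| < δ₁ := by
          rw [abs_of_nonneg (by linarith)]
          linarith [le_abs_self (s - t)]
        have hnear : |u a - u t| < ε/2 := by
          have := hδ₁ haF (by rwa [Real.dist_eq])
          rwa [Real.dist_eq] at this
        have hfar : mu * |u b - u t| ≤ ε/2 := by
          by_cases hb : |b - t| < δ₁
          · have h2 : |u b - u t| < ε/2 := by
              have := hδ₁ hbF (by rwa [Real.dist_eq])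
              rwa [Real.dist_eq] at this
            have hmu1 : mu ≤ 1 := by linarith
            nlinarith [abs_nonneg (u b - u t)]
          · push_neg at hb
            have hbt : δ₁ ≤ b - t := by
              rw [abs_of_nonneg (by linarith)] at hb; exact hb
            have hst2 : s - t < δ₂ := by
              linarith [le_abs_self (s - t)]
            have hba2 : δ₁/2 ≤ b - a := by linarith
            have hsa : s - a < δ₂ := by linarith
            have hmu2 : mu * (2*M) ≤ ε/2 := by
              rw [hmudef, div_mul_eq_mul_div, div_le_iff₀ hba]
              have k1 := mul_le_mul_of_nonneg_right hsa.le (by positivity : (0:ℝ) ≤ 2*M)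
              have k2 := mul_le_mul_of_nonneg_left hba2 hε.le
              nlinarith
            have hub : |u b - u t| ≤ 2*M := by
              calc |u b - u t| ≤ |u b| + |u t| := abs_sub _ _
              _ ≤ 2*M := by linarith [hMb b hbF, hMb t htF]
            nlinarith [abs_nonneg (u b - u t)]
        exact aux_comb (u a) (u b) (u t) lam mu ε hl hm hsum hε hnear hfar
      · -- s < t, so b ≤ t : near point is b
        have htb : b ≤ t := csInf_le (hBc s).bddBelow ⟨htF, hst'.le⟩
        have hnearb : |b - t| < δ₁ := by
          rw [abs_of_nonpos (by linarith), neg_sub]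
          linarith [le_abs_self (t - s), abs_sub_comm s t]
        have hnear : |u b - u t| < ε/2 := by
          have := hδ₁ hbF (by rwa [Real.dist_eq])
          rwa [Real.dist_eq] at this
        have hfar : lam * |u a - u t| ≤ ε/2 := by
          by_cases ha : |a - t| < δ₁
          · have h2 : |u a - u t| < ε/2 := by
              have := hδ₁ haF (by rwa [Real.dist_eq])
              rwa [Real.dist_eq] at this
            have hlam1 : lam ≤ 1 := by linarith
            nlinarith [abs_nonneg (u a - u t)]
          · push_neg at ha
            have hat : δ₁ ≤ t - a := by
              rw [abs_of_nonpos (by linarith), neg_sub] at ha; exact ha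
            have hst2 : t - s < δ₂ := by
              linarith [le_abs_self (t - s), abs_sub_comm s t]
            have hba2 : δ₁/2 ≤ b - a := by linarith
            have hbs : b - s < δ₂ := by linarith
            have hlam2 : lam * (2*M) ≤ ε/2 := by
              rw [hlamdef, div_mul_eq_mul_div, div_le_iff₀ hba]
              have k1 := mul_le_mul_of_nonneg_right hbs.le (by positivity : (0:ℝ) ≤ 2*M)
              have k2 := mul_le_mul_of_nonneg_left hba2 hε.le
              nlinarith
            have hua : |u a - u t| ≤ 2*M := by
              calc |u a - u t| ≤ |u a| + |u t| := abs_sub _ _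
              _ ≤ 2*M := by linarith [hMb a haF, hMb t htF]
            nlinarith [abs_nonneg (u a - u t)]
        have := aux_comb (u b) (u a) (u t) mu lam ε hm hl (by linarith) hε hnear hfar
        have hcomm : u a * lam + u b * mu - u t = u b * mu + u a * lam - u t := by ring
        rw [hcomm]
        exact this
  · -- continuity at a point not in F : locally affine
    obtain ⟨haF, hat, hbF, htb⟩ := habs t ht htF
    set a := sSup (F ∩ Iic t) with hadef
    set b := sInf (F ∩ Ici t) with hbdef
    have hnotin : ∀ x ∈ F, x ∉ Ioo a b := by
      intro x hxF hx
      rcases le_or_gt x t with hxt | hxt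
      · exact absurd (le_csSup (hAc t).bddAbove ⟨hxF, hxt⟩) (not_le.mpr hx.1)
      · exact absurd (csInf_le (hBc t).bddBelow ⟨hxF, hxt.le⟩) (not_le.mpr hx.2)
    have ha0 : 0 ≤ a := (hFsub haF).1
    have hb1 : b ≤ 1 := (hFsub hbF).2
    have key : ∀ s ∈ Ioo a b,
        P s = u a * ((b - s)/(b-a)) + u b * ((s-a)/(b-a)) := by
      intro s hsab
      have hsI : s ∈ Icc (0:ℝ) 1 :=
        ⟨le_of_lt (lt_of_le_of_lt ha0 hsab.1), le_of_lt (lt_of_lt_of_le hsab.2 hb1)⟩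
      have hsF : s ∉ F := fun h => hnotin s h hsab
      obtain ⟨hA1, hA2, hB1, hB2⟩ := habs s hsI hsF
      have hAeq : sSup (F ∩ Iic s) = a := by
        apply le_antisymm
        · by_contra hlt; push_neg at hlt
          exact hnotin _ hA1 ⟨hlt, lt_trans hA2 hsab.2⟩
        · exact le_csSup (hAc s).bddAbove ⟨haF, hsab.1.le⟩
      have hBeq : sInf (F ∩ Ici s) = b := by
        apply le_antisymm
        · exact csInf_le (hBc s).bddBelow ⟨hbF, hsab.2.le⟩
        · by_contra hlt; push_neg at hlt
          exact hnotin _ hB1 ⟨lt_trans hsab.1 hB2, hlt⟩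
      rw [hPnF s hsI hsF, hAeq, hBeq]
    have hcont : ContinuousAt (fun s => u a * ((b - s)/(b-a)) + u b * ((s-a)/(b-a))) t := by
      apply Continuous.continuousAt
      exact ((continuous_const.mul ((continuous_const.sub continuous_id).div_const _)).add
        (continuous_const.mul ((continuous_id.sub continuous_const).div_const _)))
    have hmem : Ioo a b ∈ nhds t := Ioo_mem_nhds hat htb
    have heq : P =ᶠ[nhds t] (fun s => u a * ((b - s)/(b-a)) + u b * ((s-a)/(b-a))) :=
      Filter.eventuallyEq_of_mem hmem key
    exact (hcont.congr heq.symm).continuousWithinAt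
end

section
/- With the notation of piecewise linear interpolation at knots S_N on a compact F ⊆ [0,1], for any continuous f on F and any t ∈ F one has |π_N(f)(t) − f(t)| ≤ M_f(δ_N) + Ψ_f(δ_N), where M_f is the truncated modulus of continuity, Ψ_f(δ) = sup_{s≥1} M_f(sδ)/s, and δ_N = sup_{t∈F} min(|t−t⁻_N|, |t−t⁺_N|). In particular ‖π_N(f) − f‖_∞ ≤ 2Ψ_f(δ_N). -/
/-!
If `t` lies strictly between its neighbouring knots `L < t < R`, put `a = t - L`, `b = R - t`;
then `π f t - f t = (b (f L - f t) + a (f R - f t)) / (a + b)`. One of the gaps, say `a`, is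
at most `δ`, so its term contributes at most `M δ`. The other gap may be long, but
`M b ≤ (b / δ) Ψ δ` by the definition of `Ψ`, and its weight `a / (a + b)` brings the factor
down to `a b / ((a + b) δ) ≤ a / δ ≤ 1`, so it contributes at most `Ψ δ`. Finally
`M δ ≤ Ψ δ` (dilation factor `1`).
-/

open Set Classical

/-- Piecewise linear interpolation of `f` at the knots in `S`. -/
noncomputable def piecewiseLin (S : Set ℝ) (f : ℝ → ℝ) (t : ℝ) : ℝ :=
  if t ∈ S then f t
  else
    f (sSup (S ∩ Iic t)) *
        ((sInf (S ∩ Ici t) - t) / (sInf (S ∩ Ici t) - sSup (S ∩ Iic t)))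
      + f (sInf (S ∩ Ici t)) *
        ((t - sSup (S ∩ Iic t)) / (sInf (S ∩ Ici t) - sSup (S ∩ Iic t)))

def oscillationSet (F : Set ℝ) (f : ℝ → ℝ) (δ : ℝ) : Set ℝ :=
  {y : ℝ | ∃ s ∈ F, ∃ u ∈ F, |s - u| ≤ δ ∧ y = |f s - f u|}

structure IsTruncatedModulus (F : Set ℝ) (f : ℝ → ℝ) (M : ℝ → ℝ) : Prop where
  eq_sSup : ∀ δ : ℝ, δ ≤ 1 → M δ = sSup (oscillationSet F f δ)
  eq_one : ∀ δ : ℝ, 1 ≤ δ → M δ = M 1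

noncomputable def dilationSup (M : ℝ → ℝ) (δ : ℝ) : ℝ :=
  ⨆ s : {s : ℝ // 1 ≤ s}, M ((s : ℝ) * δ) / (s : ℝ)

lemma bddAbove_oscillationSet {F : Set ℝ} {f : ℝ → ℝ} {C : ℝ} (hC : ∀ x ∈ F, ‖f x‖ ≤ C)
    (δ : ℝ) : BddAbove (oscillationSet F f δ) := by
  refine ⟨2 * C, ?_⟩
  rintro _ ⟨s, hs, u, hu, -, rfl⟩
  calc |f s - f u| = ‖f s - f u‖ := (Real.norm_eq_abs _).symm
    _ ≤ ‖f s‖ + ‖f u‖ := norm_sub_le _ _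
    _ ≤ 2 * C := by linarith [hC s hs, hC u hu]

namespace IsTruncatedModulus

variable {F : Set ℝ} {f : ℝ → ℝ} {M : ℝ → ℝ}

lemma abs_sub_le (hM : IsTruncatedModulus F f M) (hB : ∀ δ, BddAbove (oscillationSet F f δ))
    {δ : ℝ} (hδ : δ ≤ 1) {s u : ℝ} (hs : s ∈ F) (hu : u ∈ F) (hsu : |s - u| ≤ δ) :
    |f s - f u| ≤ M δ :=
  hM.eq_sSup δ hδ ▸ le_csSup (hB δ) ⟨s, hs, u, hu, hsu, rfl⟩

lemma nonneg (hM : IsTruncatedModulus F f M) (hB : ∀ δ, BddAbove (oscillationSet F f δ))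
    {x : ℝ} (hx : x ∈ F) {δ : ℝ} (hδ : 0 ≤ δ) : 0 ≤ M δ := by
  rcases le_total δ 1 with hδ1 | hδ1
  · simpa using hM.abs_sub_le hB hδ1 hx hx (by simpa using hδ)
  · rw [hM.eq_one δ hδ1]
    simpa using hM.abs_sub_le hB le_rfl hx hx (by simp)

lemma monotoneOn (hM : IsTruncatedModulus F f M) (hB : ∀ δ, BddAbove (oscillationSet F f δ))
    {x : ℝ} (hx : x ∈ F) : MonotoneOn M (Ici 0) := by
  have hle : ∀ a b : ℝ, 0 ≤ a → a ≤ b → b ≤ 1 → M a ≤ M b := by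
    intro a b ha hab hb
    rw [hM.eq_sSup a (hab.trans hb), hM.eq_sSup b hb]
    refine csSup_le_csSup (hB b) ⟨0, x, hx, x, hx, by simpa using ha, by simp⟩ ?_
    rintro _ ⟨s, hs, u, hu, hsu, rfl⟩
    exact ⟨s, hs, u, hu, hsu.trans hab, rfl⟩
  intro a (ha : 0 ≤ a) b _ hab
  rcases le_total b 1 with hb | hb
  · exact hle a b ha hab hb
  · rw [hM.eq_one b hb]
    rcases le_total a 1 with ha1 | ha1
    · exact hle a 1 ha ha1 le_rfl
    · rw [hM.eq_one a ha1]

lemma div_le_dilationSup (hM : IsTruncatedModulus F f M)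
    (hB : ∀ δ, BddAbove (oscillationSet F f δ)) {x : ℝ} (hx : x ∈ F) {δ : ℝ} (hδ : 0 ≤ δ)
    {s : ℝ} (hs : 1 ≤ s) : M (s * δ) / s ≤ dilationSup M δ := by
  have hbound : ∀ r : {r : ℝ // 1 ≤ r}, M (r * δ) / r ≤ M 1 := by
    rintro ⟨r, hr⟩
    have hrδ : 0 ≤ r * δ := mul_nonneg (zero_le_one.trans hr) hδ
    calc M (r * δ) / r ≤ M (r * δ) := div_le_self (hM.nonneg hB hx hrδ) hr
      _ ≤ M (max (r * δ) 1) :=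
          hM.monotoneOn hB hx hrδ (le_trans hrδ (le_max_left _ _)) (le_max_left _ _)
      _ = M 1 := hM.eq_one _ (le_max_right _ _)
  exact le_ciSup (f := fun r : {r : ℝ // 1 ≤ r} => M (r * δ) / r)
    ⟨M 1, by rintro _ ⟨r, rfl⟩; exact hbound r⟩ ⟨s, hs⟩

lemma le_dilationSup (hM : IsTruncatedModulus F f M)
    (hB : ∀ δ, BddAbove (oscillationSet F f δ)) {x : ℝ} (hx : x ∈ F) {δ : ℝ} (hδ : 0 ≤ δ) :
    M δ ≤ dilationSup M δ := by
  simpa using hM.div_le_dilationSup hB hx hδ le_rfl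

lemma le_max_mul_dilationSup (hM : IsTruncatedModulus F f M)
    (hB : ∀ δ, BddAbove (oscillationSet F f δ)) {x : ℝ} (hx : x ∈ F) {δ : ℝ} (hδ : 0 < δ)
    {c : ℝ} (hc : 0 ≤ c) : M c ≤ max 1 (c / δ) * dilationSup M δ := by
  have hΨ := hM.le_dilationSup hB hx hδ.le
  have hΨ0 : 0 ≤ dilationSup M δ := (hM.nonneg hB hx hδ.le).trans hΨ
  rcases le_total c δ with hcδ | hδc
  · calc M c ≤ M δ := hM.monotoneOn hB hx hc hδ.le hcδ
      _ ≤ 1 * dilationSup M δ := by rw [one_mul]; exact hΨ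
      _ ≤ max 1 (c / δ) * dilationSup M δ := by gcongr; exact le_max_left _ _
  · have hs : 1 ≤ c / δ := (one_le_div hδ).2 hδc
    have h := hM.div_le_dilationSup hB hx hδ.le hs
    rw [div_mul_cancel₀ _ hδ.ne', div_le_iff₀ (zero_lt_one.trans_le hs)] at h
    calc M c ≤ c / δ * dilationSup M δ := by linarith
      _ ≤ max 1 (c / δ) * dilationSup M δ := by gcongr; exact le_max_right _ _

end IsTruncatedModulus

lemma weighted_sum_le_add {a b δ x y m p : ℝ} (ha : 0 < a) (hb : 0 < b) (haδ : a ≤ δ)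
    (hm : 0 ≤ m) (hp : 0 ≤ p) (hx : x ≤ m) (hy : y ≤ max 1 (b / δ) * p) :
    b / (a + b) * x + a / (a + b) * y ≤ m + p := by
  have hab : 0 < a + b := add_pos ha hb
  have hδ : 0 < δ := ha.trans_le haδ
  have hweight : a / (a + b) * max 1 (b / δ) ≤ 1 := by
    rw [mul_max_of_nonneg _ _ (by positivity), max_le_iff, mul_one, div_mul_div_comm,
      div_le_one hab, div_le_one (by positivity)]
    constructor <;> nlinarith
  have hx' : b / (a + b) * x ≤ m :=
    calc b / (a + b) * x ≤ b / (a + b) * m := by gcongr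
      _ ≤ 1 * m := by gcongr; rw [div_le_one hab]; linarith
      _ = m := one_mul m
  have hy' : a / (a + b) * y ≤ p :=
    calc a / (a + b) * y ≤ a / (a + b) * (max 1 (b / δ) * p) := by gcongr
      _ = a / (a + b) * max 1 (b / δ) * p := by ring
      _ ≤ 1 * p := by gcongr
      _ = p := one_mul p
  linarith

lemma sSup_inter_Iic_mem {S : Set ℝ} (hS : S.Finite) {a t : ℝ} (ha : a ∈ S) (hat : a ≤ t) :
    sSup (S ∩ Iic t) ∈ S ∩ Iic t :=
  Nonempty.csSup_mem ⟨a, ha, hat⟩ (hS.inter_of_left _)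

lemma sInf_inter_Ici_mem {S : Set ℝ} (hS : S.Finite) {a t : ℝ} (ha : a ∈ S) (hta : t ≤ a) :
    sInf (S ∩ Ici t) ∈ S ∩ Ici t :=
  Nonempty.csInf_mem ⟨a, ha, hta⟩ (hS.inter_of_left _)

lemma min_knot_gap_le_one {F S : Set ℝ} (hFsub : F ⊆ Icc 0 1) (hSfin : S.Finite)
    (hSsub : S ⊆ F) (h0 : (0 : ℝ) ∈ S) {t : ℝ} (ht : t ∈ F) :
    min |t - sSup (S ∩ Iic t)| |t - sInf (S ∩ Ici t)| ≤ 1 := by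
  have hL := hFsub (hSsub (sSup_inter_Iic_mem hSfin h0 (hFsub ht).1).1)
  have ht' := hFsub ht
  refine (min_le_left _ _).trans (abs_sub_le_iff.2 ⟨?_, ?_⟩) <;>
    linarith [hL.1, hL.2, ht'.1, ht'.2]

lemma abs_piecewiseLin_sub_le {S : Set ℝ} {f : ℝ → ℝ} {t : ℝ} (htS : t ∉ S)
    (hL : sSup (S ∩ Iic t) < t) (hR : t < sInf (S ∩ Ici t)) :
    |piecewiseLin S f t - f t| ≤
      (sInf (S ∩ Ici t) - t) / ((t - sSup (S ∩ Iic t)) + (sInf (S ∩ Ici t) - t)) *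
          |f (sSup (S ∩ Iic t)) - f t| +
        (t - sSup (S ∩ Iic t)) / ((t - sSup (S ∩ Iic t)) + (sInf (S ∩ Ici t) - t)) *
          |f (sInf (S ∩ Ici t)) - f t| := by
  rw [piecewiseLin, if_neg htS]
  set L := sSup (S ∩ Iic t)
  set R := sInf (S ∩ Ici t)
  have hD : (t - L) + (R - t) = R - L := by ring
  have hDpos : 0 < R - L := by linarith
  have hid : f L * ((R - t) / (R - L)) + f R * ((t - L) / (R - L)) - f t
      = (R - t) / (R - L) * (f L - f t) + (t - L) / (R - L) * (f R - f t) := by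
    field_simp
    ring
  rw [hid, hD]
  refine (abs_add_le _ _).trans_eq ?_
  rw [abs_mul, abs_mul, abs_of_pos (div_pos (by linarith) hDpos),
    abs_of_pos (div_pos (by linarith) hDpos)]

theorem abs_piecewiseLin_sub_le_add_dilationSup {F S : Set ℝ} {f M : ℝ → ℝ}
    (hM : IsTruncatedModulus F f M) (hB : ∀ δ, BddAbove (oscillationSet F f δ))
    (hFsub : F ⊆ Icc 0 1) (hSfin : S.Finite) (hSsub : S ⊆ F) (h0 : (0 : ℝ) ∈ S)
    (h1 : (1 : ℝ) ∈ S) {δ : ℝ} (hδ : 0 ≤ δ) {t : ℝ} (ht : t ∈ F)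
    (hgap : min |t - sSup (S ∩ Iic t)| |t - sInf (S ∩ Ici t)| ≤ δ) :
    |piecewiseLin S f t - f t| ≤ M δ + dilationSup M δ := by
  have hM0 : 0 ≤ M δ := hM.nonneg hB ht hδ
  have hΨ0 : 0 ≤ dilationSup M δ := hM0.trans (hM.le_dilationSup hB ht hδ)
  by_cases htS : t ∈ S
  · simp only [piecewiseLin, if_pos htS, sub_self, abs_zero]
    positivity
  obtain ⟨hLS, hLt⟩ := sSup_inter_Iic_mem hSfin h0 (hFsub ht).1
  obtain ⟨hRS, htR⟩ := sInf_inter_Ici_mem hSfin h1 (hFsub ht).2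
  set L := sSup (S ∩ Iic t)
  set R := sInf (S ∩ Ici t)
  have hLt : L < t := hLt.lt_of_ne fun h => htS (h ▸ hLS)
  have htR : t < R := htR.lt_of_ne' fun h => htS (h ▸ hRS)
  have hL01 := hFsub (hSsub hLS)
  have hR01 := hFsub (hSsub hRS)
  have hfL : |f L - f t| ≤ M (t - L) :=
    hM.abs_sub_le hB (by linarith [hL01.1, (hFsub ht).2]) (hSsub hLS) ht
      (by rw [abs_sub_comm, abs_of_pos (by linarith)])
  have hfR : |f R - f t| ≤ M (R - t) :=
    hM.abs_sub_le hB (by linarith [hR01.2, (hFsub ht).1]) (hSsub hRS) ht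
      (by rw [abs_of_pos (by linarith)])
  rw [abs_of_pos (by linarith : 0 < t - L), abs_of_neg (by linarith : t - R < 0), neg_sub]
    at hgap
  refine (abs_piecewiseLin_sub_le htS hLt htR).trans ?_
  rcases min_le_iff.1 hgap with haδ | hbδ
  · have hδpos : 0 < δ := (sub_pos.2 hLt).trans_le haδ
    exact weighted_sum_le_add (sub_pos.2 hLt) (sub_pos.2 htR) haδ hM0 hΨ0
      (hfL.trans (hM.monotoneOn hB ht (sub_pos.2 hLt).le hδ haδ))
      (hfR.trans (hM.le_max_mul_dilationSup hB ht hδpos (sub_pos.2 htR).le))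
  · have hδpos : 0 < δ := (sub_pos.2 htR).trans_le hbδ
    have h := weighted_sum_le_add (sub_pos.2 htR) (sub_pos.2 hLt) hbδ hM0 hΨ0
      (hfR.trans (hM.monotoneOn hB ht (sub_pos.2 htR).le hδ hbδ))
      (hfL.trans (hM.le_max_mul_dilationSup hB ht hδpos (sub_pos.2 hLt).le))
    rw [add_comm (R - t)] at h
    linarith

theorem stmt_11 (F : Set ℝ) (hFcomp : IsCompact F) (hFsub : F ⊆ Icc (0:ℝ) 1)
    (S : Set ℝ) (hSfin : S.Finite) (hSsub : S ⊆ F)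
    (h0 : (0:ℝ) ∈ S) (h1 : (1:ℝ) ∈ S)
    (f : ℝ → ℝ) (hf : ContinuousOn f F)
    (M : ℝ → ℝ)
    (hMle : ∀ δ : ℝ, δ ≤ 1 →
      M δ = sSup {y : ℝ | ∃ s ∈ F, ∃ u ∈ F, |s - u| ≤ δ ∧ y = |f s - f u|})
    (hMge : ∀ δ : ℝ, 1 ≤ δ → M δ = M 1)
    (Ψ : ℝ → ℝ)
    (hΨ : ∀ δ : ℝ, Ψ δ = ⨆ s : {s : ℝ // 1 ≤ s}, M ((s : ℝ) * δ) / (s : ℝ))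
    (δN : ℝ)
    (hδN : δN = ⨆ t : F,
      min |(t : ℝ) - sSup (S ∩ Iic (t : ℝ))| |(t : ℝ) - sInf (S ∩ Ici (t : ℝ))|)
    (t : ℝ) (ht : t ∈ F) :
    |piecewiseLin S f t - f t| ≤ M δN + Ψ δN ∧
    |piecewiseLin S f t - f t| ≤ 2 * Ψ δN := by
  have hM : IsTruncatedModulus F f M := ⟨hMle, hMge⟩
  obtain rfl : Ψ = dilationSup M := funext hΨ
  obtain ⟨C, hC⟩ := hFcomp.exists_bound_of_continuousOn hf
  have hB := bddAbove_oscillationSet hC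
  have hgap : min |t - sSup (S ∩ Iic t)| |t - sInf (S ∩ Ici t)| ≤ δN := by
    rw [hδN]
    refine le_ciSup (f := fun x : F => min |(x : ℝ) - sSup (S ∩ Iic (x : ℝ))|
      |(x : ℝ) - sInf (S ∩ Ici (x : ℝ))|) ⟨1, ?_⟩ ⟨t, ht⟩
    rintro _ ⟨x, rfl⟩
    exact min_knot_gap_le_one hFsub hSfin hSsub h0 x.2
  have hδN : 0 ≤ δN := (le_min (abs_nonneg _) (abs_nonneg _)).trans hgap
  have hlocal :=
    abs_piecewiseLin_sub_le_add_dilationSup hM hB hFsub hSfin hSsub h0 h1 hδN ht hgap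
  exact ⟨hlocal, hlocal.trans (by linarith [hM.le_dilationSup hB ht hδN])⟩
end

section
/- Let K be a kernel on F ⊆ [0,1] that is β-Hölder continuous in each variable with constant c_K, with knots S_N ⊆ F and grid size δ_N = sup_{t∈F} min(|t−t⁻_N|,|t−t⁺_N|). Then for all t ∈ F, |K_N(t,t) + K(t,t) − 2·Σᵢ φᵢ(t)K(t,tᵢ)| ≤ 6 c_K δ_N^β, where K_N(x,x') = Σ_{i,j} K(tᵢ,tⱼ)φᵢ(x)φⱼ(x') and φᵢ are the hat basis functions at the knots. Equivalently, sup_{t∈F} ‖ρ_N(K_N(·,t)) − K(·,t)‖_H² ≤ 6 c_K δ_N^β, where ρ_N(K_N(·,t)) = Σᵢ φᵢ(t)K(·,tᵢ). -/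
open Set Classical

lemma stmt_16_aux {x y β : ℝ} (hx : 0 < x) (hy : 0 < y) (hβ0 : 0 < β) (hβ1 : β ≤ 1) :
    y / (x + y) * x ^ β ≤ min x y ^ β := by
  have hxy : 0 < x + y := by linarith
  rcases le_total x y with h | h
  · rw [min_eq_left h]
    have h1 : y / (x + y) ≤ 1 := by rw [div_le_one hxy]; linarith
    nlinarith [Real.rpow_nonneg hx.le β]
  · rw [min_eq_right h]
    have h1 : (x / y) ^ β ≤ x / y := by
      have h2 : (1 : ℝ) ≤ x / y := by rw [le_div_iff₀ hy]; linarith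
      have := Real.rpow_le_rpow_of_exponent_le h2 hβ1
      simpa using this
    have h2 : (x / y) ^ β = x ^ β / y ^ β := Real.div_rpow hx.le hy.le β
    have hyβ : 0 < y ^ β := Real.rpow_pos_of_pos hy β
    rw [h2, div_le_div_iff₀ hyβ hy] at h1
    rw [div_mul_eq_mul_div, div_le_iff₀ hxy]
    nlinarith [Real.rpow_nonneg hy.le β]

set_option maxHeartbeats 1600000 in
theorem stmt_16 {H : Type*} [NormedAddCommGroup H] [InnerProductSpace ℝ H]
    (F : Set ℝ) (hFcomp : IsCompact F) (hFsub : F ⊆ Icc (0:ℝ) 1)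
    (S : Set ℝ) (hSfin : S.Finite) (hSsub : S ⊆ F) (h0 : (0:ℝ) ∈ S) (h1 : (1:ℝ) ∈ S)
    (K : ℝ → ℝ → ℝ) (hKsym : ∀ x ∈ F, ∀ y ∈ F, K x y = K y x)
    (β cK : ℝ) (hβ0 : 0 < β) (hβ1 : β ≤ 1) (hcK : 0 < cK)
    (hHolder : ∀ x ∈ F, ∀ s ∈ F, ∀ u ∈ F, |K x s - K x u| ≤ cK * |s - u| ^ β)
    (k : ℝ → H) (hker : ∀ x ∈ F, ∀ y ∈ F, (inner ℝ (k x) (k y) : ℝ) = K x y)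
    (tm tp wm wp : ℝ → ℝ)
    (htm : ∀ t, tm t = if t ∈ S then t else sSup (S ∩ Iic t))
    (htp : ∀ t, tp t = if t ∈ S then t else sInf (S ∩ Ici t))
    (hwm : ∀ t, wm t = if t ∈ S then 1/2 else (tp t - t) / (tp t - tm t))
    (hwp : ∀ t, wp t = if t ∈ S then 1/2 else (t - tm t) / (tp t - tm t))
    (δN : ℝ)
    (hδN : δN = ⨆ t : F, min |(t : ℝ) - tm t| |(t : ℝ) - tp t|)
    (t : ℝ) (ht : t ∈ F) :
    |(wm t ^ 2 * K (tm t) (tm t) + wp t ^ 2 * K (tp t) (tp t)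
        + 2 * wm t * wp t * K (tm t) (tp t))
      + K t t
      - 2 * (wm t * K t (tm t) + wp t * K t (tp t))| ≤ 6 * cK * δN ^ β ∧
    ‖(wm t) • k (tm t) + (wp t) • k (tp t) - k t‖ ^ 2 ≤ 6 * cK * δN ^ β := by
  -- basic facts about tm, tp
  have htmP : ∀ s ∈ F, tm s ∈ S ∧ tm s ≤ s := by
    intro s hs
    rw [htm s]
    by_cases hsS : s ∈ S
    · simp [hsS]
    · simp only [if_neg hsS]
      have hne : (S ∩ Iic s).Nonempty := ⟨0, h0, (hFsub hs).1⟩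
      have hfin : (S ∩ Iic s).Finite := hSfin.inter_of_left _
      have := hne.csSup_mem hfin
      exact ⟨this.1, this.2⟩
  have htpP : ∀ s ∈ F, tp s ∈ S ∧ s ≤ tp s := by
    intro s hs
    rw [htp s]
    by_cases hsS : s ∈ S
    · simp [hsS]
    · simp only [if_neg hsS]
      have hne : (S ∩ Ici s).Nonempty := ⟨1, h1, (hFsub hs).2⟩
      have hfin : (S ∩ Ici s).Finite := hSfin.inter_of_left _
      have := hne.csInf_mem hfin
      exact ⟨this.1, this.2⟩
  -- δN bounds
  have hbdd : BddAbove (Set.range fun s : F => min |(s : ℝ) - tm s| |(s : ℝ) - tp s|) := by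
    refine ⟨1, ?_⟩
    rintro _ ⟨s, rfl⟩
    have hs01 := hFsub s.2
    have hm := htmP s s.2
    have hm01 := hFsub (hSsub hm.1)
    have : |(s : ℝ) - tm s| ≤ 1 := by
      simp only [mem_Icc] at hs01 hm01
      rw [abs_sub_le_iff]
      constructor <;> linarith
    exact le_trans (min_le_left _ _) this
  have hmle : min |t - tm t| |t - tp t| ≤ δN := by
    rw [hδN]
    exact le_ciSup hbdd ⟨t, ht⟩
  have hδN0 : 0 ≤ δN := le_trans (le_min (abs_nonneg _) (abs_nonneg _)) hmle
  have hδβ0 : 0 ≤ δN ^ β := Real.rpow_nonneg hδN0 β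
  by_cases htS : t ∈ S
  · -- t is a knot
    rw [htm t, htp t, hwm t, hwp t]
    simp only [if_pos htS]
    constructor
    · have hz : ((1:ℝ)/2) ^ 2 * K t t + ((1:ℝ)/2) ^ 2 * K t t
          + 2 * (1/2) * (1/2) * K t t + K t t - 2 * ((1/2) * K t t + (1/2) * K t t) = 0 := by
        ring
      rw [hz, abs_zero]
      have := mul_nonneg (by linarith : (0:ℝ) ≤ 6 * cK) hδβ0
      linarith
    · have hz : ((1:ℝ)/2) • k t + ((1:ℝ)/2) • k t - k t = 0 := by
        have : ((1:ℝ)/2) • k t + ((1:ℝ)/2) • k t = (((1:ℝ)/2) + (1/2)) • k t := by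
          rw [add_smul]
        rw [this]
        norm_num
      rw [hz, norm_zero]
      have := mul_nonneg (by linarith : (0:ℝ) ≤ 6 * cK) hδβ0
      nlinarith
  · -- t is not a knot
    obtain ⟨hmS, hmle'⟩ := htmP t ht
    obtain ⟨hpS, hple'⟩ := htpP t ht
    have hmF : tm t ∈ F := hSsub hmS
    have hpF : tp t ∈ F := hSsub hpS
    have hmlt : tm t < t := lt_of_le_of_ne hmle' (fun h => htS (h ▸ hmS))
    have hplt : t < tp t := lt_of_le_of_ne hple' (fun h => htS (h.symm ▸ hpS))
    set x : ℝ := t - tm t with hxdef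
    set y : ℝ := tp t - t with hydef
    have hx0 : 0 < x := sub_pos.mpr hmlt
    have hy0 : 0 < y := sub_pos.mpr hplt
    have hxy0 : 0 < x + y := by linarith
    have hL : tp t - tm t = x + y := by rw [hxdef, hydef]; ring
    have ha : wm t = y / (x + y) := by rw [hwm t, if_neg htS, hL]
    have hb : wp t = x / (x + y) := by rw [hwp t, if_neg htS, hL]
    set a : ℝ := wm t
    set b : ℝ := wp t
    have hab : a + b = 1 := by
      rw [ha, hb, ← add_div, add_comm y x, div_self hxy0.ne']
    have ha0 : 0 ≤ a := by rw [ha]; positivity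
    have hb0 : 0 ≤ b := by rw [hb]; positivity
    have ha1 : a ≤ 1 := by linarith
    have hb1 : b ≤ 1 := by linarith
    set m : ℝ := min x y with hmdef
    have hm0 : 0 ≤ m := le_min hx0.le hy0.le
    have habsx : |t - tm t| = x := abs_of_pos hx0
    have habsy : |t - tp t| = y := by
      rw [abs_sub_comm]; exact abs_of_pos hy0
    have hmδ : m ≤ δN := by
      rw [hmdef, ← habsx, ← habsy]; exact hmle
    have hmβδ : m ^ β ≤ δN ^ β := Real.rpow_le_rpow hm0 hmδ hβ0.le
    have hmβ0 : 0 ≤ m ^ β := Real.rpow_nonneg hm0 β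
    have hxβ0 : 0 ≤ x ^ β := Real.rpow_nonneg hx0.le β
    have hyβ0 : 0 ≤ y ^ β := Real.rpow_nonneg hy0.le β
    have hax : a * x ^ β ≤ m ^ β := by
      rw [ha]; exact stmt_16_aux hx0 hy0 hβ0 hβ1
    have hby : b * y ^ β ≤ m ^ β := by
      have h := stmt_16_aux hy0 hx0 hβ0 hβ1
      rw [min_comm y x, add_comm y x] at h
      rw [hb]; exact h
    -- Hölder bounds
    have habs_mt : |tm t - t| = x := by rw [abs_sub_comm]; exact abs_of_pos hx0
    have habs_pt : |tp t - t| = y := abs_of_pos hy0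
    have habs_tm : |t - tm t| = x := abs_of_pos hx0
    have habs_tp : |t - tp t| = y := by rw [abs_sub_comm]; exact abs_of_pos hy0
    have h1 : |K (tm t) (tm t) - K (tm t) t| ≤ cK * x ^ β := by
      have := hHolder (tm t) hmF (tm t) hmF t ht; rwa [habs_mt] at this
    have h2 : |K t t - K t (tm t)| ≤ cK * x ^ β := by
      have := hHolder t ht t ht (tm t) hmF; rwa [habs_tm] at this
    have h3 : |K (tp t) (tp t) - K (tp t) t| ≤ cK * y ^ β := by
      have := hHolder (tp t) hpF (tp t) hpF t ht; rwa [habs_pt] at this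
    have h4 : |K t t - K t (tp t)| ≤ cK * y ^ β := by
      have := hHolder t ht t ht (tp t) hpF; rwa [habs_tp] at this
    -- inner products
    have i_mm : (inner ℝ (k (tm t)) (k (tm t)) : ℝ) = K (tm t) (tm t) := hker _ hmF _ hmF
    have i_pp : (inner ℝ (k (tp t)) (k (tp t)) : ℝ) = K (tp t) (tp t) := hker _ hpF _ hpF
    have i_mp : (inner ℝ (k (tm t)) (k (tp t)) : ℝ) = K (tm t) (tp t) := hker _ hmF _ hpF
    have i_pm : (inner ℝ (k (tp t)) (k (tm t)) : ℝ) = K (tp t) (tm t) := hker _ hpF _ hmF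
    have i_mt : (inner ℝ (k (tm t)) (k t) : ℝ) = K (tm t) t := hker _ hmF _ ht
    have i_tm : (inner ℝ (k t) (k (tm t)) : ℝ) = K t (tm t) := hker _ ht _ hmF
    have i_pt : (inner ℝ (k (tp t)) (k t) : ℝ) = K (tp t) t := hker _ hpF _ ht
    have i_tp : (inner ℝ (k t) (k (tp t)) : ℝ) = K t (tp t) := hker _ ht _ hpF
    have i_tt : (inner ℝ (k t) (k t) : ℝ) = K t t := hker _ ht _ ht
    have sym_mt : K (tm t) t = K t (tm t) := hKsym _ hmF _ ht
    have sym_pt : K (tp t) t = K t (tp t) := hKsym _ hpF _ ht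
    have sym_mp : K (tm t) (tp t) = K (tp t) (tm t) := hKsym _ hmF _ hpF
    -- norm expansion identity
    have hnorm : ‖a • k (tm t) + b • k (tp t) - k t‖ ^ 2
        = a ^ 2 * K (tm t) (tm t) + b ^ 2 * K (tp t) (tp t)
          + 2 * a * b * K (tm t) (tp t) + K t t
          - 2 * (a * K t (tm t) + b * K t (tp t)) := by
      rw [← real_inner_self_eq_norm_sq]
      simp only [inner_sub_left, inner_sub_right, inner_add_left, inner_add_right,
        real_inner_smul_left, real_inner_smul_right]
      rw [i_mm, i_pp, i_mp, i_pm, i_mt, i_tm, i_pt, i_tp, i_tt, sym_mt, sym_pt, sym_mp]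
      ring
    -- squared norms of differences
    have hAm : ‖k (tm t) - k t‖ ^ 2 ≤ 2 * cK * x ^ β := by
      rw [← real_inner_self_eq_norm_sq]
      simp only [inner_sub_left, inner_sub_right]
      rw [i_mm, i_mt, i_tm, i_tt]
      have e1 := abs_le.1 h1
      have e2 := abs_le.1 h2
      rw [sym_mt] at e1
      linarith [e1.1, e1.2, e2.1, e2.2]
    have hAp : ‖k (tp t) - k t‖ ^ 2 ≤ 2 * cK * y ^ β := by
      rw [← real_inner_self_eq_norm_sq]
      simp only [inner_sub_left, inner_sub_right]
      rw [i_pp, i_pt, i_tp, i_tt]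
      have e1 := abs_le.1 h3
      have e2 := abs_le.1 h4
      rw [sym_pt] at e1
      linarith [e1.1, e1.2, e2.1, e2.2]
    -- cross term bound
    have hcross : |(inner ℝ (k (tm t) - k t) (k (tp t) - k t) : ℝ)| ≤ 2 * cK * m ^ β := by
      have hval : (inner ℝ (k (tm t) - k t) (k (tp t) - k t) : ℝ)
          = K (tm t) (tp t) - K (tm t) t - K t (tp t) + K t t := by
        simp only [inner_sub_left, inner_sub_right]
        rw [i_mp, i_mt, i_tp, i_tt]
        ring
      rw [hval]
      rcases le_total x y with hxy | hxy
      · -- bound via x: use symmetry to move x into second slot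
        have hmx : m ^ β = x ^ β := by rw [hmdef, min_eq_left hxy]
        have c1 : |K (tp t) (tm t) - K (tp t) t| ≤ cK * x ^ β := by
          have := hHolder (tp t) hpF (tm t) hmF t ht; rwa [habs_mt] at this
        have c2 := abs_le.1 c1
        have c3 := abs_le.1 h2
        rw [hmx, sym_mp, sym_mt, ← sym_pt, abs_le]
        constructor <;> linarith [c2.1, c2.2, c3.1, c3.2]
      · have hmy : m ^ β = y ^ β := by rw [hmdef, min_eq_right hxy]
        have c1 : |K (tm t) (tp t) - K (tm t) t| ≤ cK * y ^ β := by
          have := hHolder (tm t) hmF (tp t) hpF t ht; rwa [habs_pt] at this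
        have c2 := abs_le.1 c1
        have c3 := abs_le.1 h4
        rw [hmy, abs_le]
        constructor <;> linarith [c2.1, c2.2, c3.1, c3.2]
    -- key bound on the squared norm
    have hkey : ‖a • k (tm t) + b • k (tp t) - k t‖ ^ 2 ≤ 6 * cK * δN ^ β := by
      have hsplit : a • k (tm t) + b • k (tp t) - k t
          = a • (k (tm t) - k t) + b • (k (tp t) - k t) := by
        have hmod : a • (k (tm t) - k t) + b • (k (tp t) - k t)
            = a • k (tm t) + b • k (tp t) - (a + b) • k t := by module
        rw [hmod, hab, one_smul]
      rw [hsplit, norm_add_sq_real, norm_smul, norm_smul, Real.norm_eq_abs,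
        Real.norm_eq_abs, abs_of_nonneg ha0, abs_of_nonneg hb0, mul_pow, mul_pow,
        real_inner_smul_left, real_inner_smul_right]
      have hIc := abs_le.1 hcross
      have hNm0 : 0 ≤ ‖k (tm t) - k t‖ ^ 2 := sq_nonneg _
      have hNp0 : 0 ≤ ‖k (tp t) - k t‖ ^ 2 := sq_nonneg _
      -- a² Nm ≤ 2 cK a m^β etc.
      have s1 : a ^ 2 * ‖k (tm t) - k t‖ ^ 2 ≤ 2 * cK * (a * m ^ β) := by
        have t1 : a ^ 2 * ‖k (tm t) - k t‖ ^ 2 ≤ a ^ 2 * (2 * cK * x ^ β) :=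
          mul_le_mul_of_nonneg_left hAm (sq_nonneg a)
        have t2 : a * (a * x ^ β) ≤ a * m ^ β :=
          mul_le_mul_of_nonneg_left hax ha0
        have t3 : 2 * cK * (a * (a * x ^ β)) ≤ 2 * cK * (a * m ^ β) :=
          mul_le_mul_of_nonneg_left t2 (by linarith)
        linarith [t1, t3]
      have s2 : b ^ 2 * ‖k (tp t) - k t‖ ^ 2 ≤ 2 * cK * (b * m ^ β) := by
        have t1 : b ^ 2 * ‖k (tp t) - k t‖ ^ 2 ≤ b ^ 2 * (2 * cK * y ^ β) :=
          mul_le_mul_of_nonneg_left hAp (sq_nonneg b)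
        have t2 : b * (b * y ^ β) ≤ b * m ^ β :=
          mul_le_mul_of_nonneg_left hby hb0
        have t3 : 2 * cK * (b * (b * y ^ β)) ≤ 2 * cK * (b * m ^ β) :=
          mul_le_mul_of_nonneg_left t2 (by linarith)
        linarith [t1, t3]
      have s3 : 2 * (a * (b * (inner ℝ (k (tm t) - k t) (k (tp t) - k t) : ℝ)))
          ≤ cK * m ^ β := by
        have hab0 : 0 ≤ a * b := mul_nonneg ha0 hb0
        have t1 : a * b * (inner ℝ (k (tm t) - k t) (k (tp t) - k t) : ℝ)
            ≤ a * b * (2 * cK * m ^ β) := mul_le_mul_of_nonneg_left hIc.2 hab0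
        have hsq : (a + b) ^ 2 = 1 := by rw [hab]; norm_num
        have t2 : 4 * (a * b) ≤ 1 := by linarith [sq_nonneg (a - b), hsq]
        have t3 : 0 ≤ cK * m ^ β := mul_nonneg hcK.le hmβ0
        have t4 : 4 * (a * b) * (cK * m ^ β) ≤ 1 * (cK * m ^ β) :=
          mul_le_mul_of_nonneg_right t2 t3
        linarith [t1, t4]
      have hfin : 2 * cK * (a * m ^ β) + cK * m ^ β + 2 * cK * (b * m ^ β)
          ≤ 6 * cK * δN ^ β := by
        have hsum : a * m ^ β + b * m ^ β = m ^ β := by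
          rw [← add_mul, hab, one_mul]
        have e : 2 * cK * (a * m ^ β) + cK * m ^ β + 2 * cK * (b * m ^ β)
            = 3 * cK * m ^ β := by linear_combination (2 * cK) * hsum
        rw [e]
        have h3 : 3 * cK * m ^ β ≤ 3 * cK * δN ^ β :=
          mul_le_mul_of_nonneg_left hmβδ (by linarith)
        linarith [h3, mul_nonneg hcK.le hδβ0]
      linarith
    constructor
    · have heq : (a ^ 2 * K (tm t) (tm t) + b ^ 2 * K (tp t) (tp t)
          + 2 * a * b * K (tm t) (tp t)) + K t t
          - 2 * (a * K t (tm t) + b * K t (tp t))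
          = ‖a • k (tm t) + b • k (tp t) - k t‖ ^ 2 := by rw [hnorm]
      rw [heq, abs_of_nonneg (sq_nonneg _)]
      exact hkey
    · exact hkey
end
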